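/- arXiv:2004.14408 — 3 statements merged into one kernel-verified Lean document; each statement's English description precedes it below -/
import Mathlib

section
/- (BSC-bound for H_α^A.) Fix α > 0, α ≠ 1, and suppose that for every fixed y ∈ I_α^A the map x ↦ κ_α^A(x,y) is convex on I_α^A, and likewise in the second argument for every fixed first argument. Then: if α > 1, H_α^A(X_1+X_2|Y_1Y_2) ≤ h_α( h_α^{-1}(H_α^A(X_1|Y_1)) ∗ h_α^{-1}(H_α^A(X_2|Y_2)) ); and if α < 1, H_α^A(X_1+X_2|Y_1Y_2) ≥ h_α( h_α^{-1}(H_α^A(X_1|Y_1)) ∗ h_α^{-1}(H_α^A(X_2|Y_2)) ). If instead κ_α^A is concave in each argument, the two inequalities hold with ≤ and ≥ exchanged. -/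
open Real

noncomputable section

/-- Binary convolution `a∗b = a(1-b) + (1-a)b`. -/
def bconv (a b : ℝ) : ℝ := a * (1 - b) + (1 - a) * b

/-- Binary Rényi entropy `h_α(p) = (1/(1-α))·log(p^α + (1-p)^α)`. -/
def binH (α p : ℝ) : ℝ := (1 / (1 - α)) * Real.log (p ^ α + (1 - p) ^ α)

/-- Inverse of `h_α` as a map `[0, log 2] → [0, 1/2]`. -/
def binHInv (α : ℝ) : ℝ → ℝ := Function.invFunOn (binH α) (Set.Icc 0 (1/2))

/-- `k_α^A(p) = (p^α + (1-p)^α)^{1/α}`. -/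
def kA (α p : ℝ) : ℝ := (p ^ α + (1 - p) ^ α) ^ (1/α)

/-- Inverse of `k_α^A`, mapping `I_α^A` back to `[0,1/2]`. -/
def kAInv (α : ℝ) : ℝ → ℝ := Function.invFunOn (kA α) (Set.Icc 0 (1/2))

/-- `δ_α^A = 2^{(1-α)/α}`. -/
def deltaA (α : ℝ) : ℝ := (2 : ℝ) ^ ((1 - α)/α)

/-- The closed interval `I_α^A` with endpoints `1` and `δ_α^A`. -/
def IA (α : ℝ) : Set ℝ := Set.uIcc 1 (deltaA α)

/-- `κ_α^A(x,y) = k_α^A((k_α^A)⁻¹(x) ∗ (k_α^A)⁻¹(y))`. -/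
def kkA (α x y : ℝ) : ℝ := kA α (bconv (kAInv α x) (kAInv α y))

/-- `k_α^H(p) = p^α + (1-p)^α`. -/
def kH (α p : ℝ) : ℝ := p ^ α + (1 - p) ^ α

/-- Inverse of `k_α^H`, mapping `I_α^H` back to `[0,1/2]`. -/
def kHInv (α : ℝ) : ℝ → ℝ := Function.invFunOn (kH α) (Set.Icc 0 (1/2))

/-- `δ_α^H = 2^{1-α}`. -/
def deltaH (α : ℝ) : ℝ := (2 : ℝ) ^ (1 - α)

/-- The closed interval `I_α^H` with endpoints `1` and `δ_α^H`. -/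
def IH (α : ℝ) : Set ℝ := Set.uIcc 1 (deltaH α)

/-- `κ_α^H(x,y) = k_α^H((k_α^H)⁻¹(x) ∗ (k_α^H)⁻¹(y))`. -/
def kkH (α x y : ℝ) : ℝ := kH α (bconv (kHInv α x) (kHInv α y))

/-- `ĥ_α(x,y) = h_α(h_α⁻¹(x) ∗ h_α⁻¹(y))`. -/
def hhat (α x y : ℝ) : ℝ := binH α (bconv (binHInv α x) (binHInv α y))

/-- Marginal on `Y` of a joint pmf. -/
def margY {X Y : Type*} [Fintype X] (p : X → Y → ℝ) (y : Y) : ℝ := ∑ x, p x y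

/-- A joint pmf: nonnegative entries summing to one. -/
def IsPmf {X Y : Type*} [Fintype X] [Fintype Y] (p : X → Y → ℝ) : Prop :=
  (∀ x y, 0 ≤ p x y) ∧ ∑ x, ∑ y, p x y = 1

/-- Arimoto conditional Rényi entropy `H_α^A(X|Y)`. -/
def condA (α : ℝ) {X Y : Type*} [Fintype X] [Fintype Y] (p : X → Y → ℝ) : ℝ :=
  (α / (1 - α)) * Real.log (∑ y, margY p y * (∑ x, (p x y / margY p y) ^ α) ^ (1/α))

/-- Hayashi conditional Rényi entropy `H_α^H(X|Y)`. -/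
def condH (α : ℝ) {X Y : Type*} [Fintype X] [Fintype Y] (p : X → Y → ℝ) : ℝ :=
  (1 / (1 - α)) * Real.log (∑ y, ∑ x, margY p y * (p x y / margY p y) ^ α)

/-- Jizba–Arimitsu conditional Rényi entropy `H_α^J(X|Y)`. -/
def condJ (α : ℝ) {X Y : Type*} [Fintype X] [Fintype Y] (p : X → Y → ℝ) : ℝ :=
  (1 / (1 - α)) * (Real.log (∑ x, ∑ y, p x y ^ α) - Real.log (∑ y, margY p y ^ α))

/-- Cachin conditional Rényi entropy `H_α^C(X|Y)`. -/
def condC (α : ℝ) {X Y : Type*} [Fintype X] [Fintype Y] (p : X → Y → ℝ) : ℝ :=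
  (1 / (1 - α)) * ∑ y, margY p y * Real.log (∑ x, (p x y / margY p y) ^ α)

/-- `K_α^A(X|Y) = exp(((1-α)/α)·H_α^A(X|Y))`. -/
def KA (α : ℝ) {X Y : Type*} [Fintype X] [Fintype Y] (p : X → Y → ℝ) : ℝ :=
  Real.exp (((1 - α)/α) * condA α p)

/-- `K_α^H(X|Y) = exp((1-α)·H_α^H(X|Y))`. -/
def KH (α : ℝ) {X Y : Type*} [Fintype X] [Fintype Y] (p : X → Y → ℝ) : ℝ :=
  Real.exp ((1 - α) * condH α p)

/-- `K_α^J(X|Y) = exp((1-α)·H_α^J(X|Y))`. -/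
def KJ (α : ℝ) {X Y : Type*} [Fintype X] [Fintype Y] (p : X → Y → ℝ) : ℝ :=
  Real.exp ((1 - α) * condJ α p)

/-- Joint pmf of `(X₁+X₂, (Y₁,Y₂))` for independent pairs `(X₁,Y₁)`, `(X₂,Y₂)`. -/
def combine {Y1 Y2 : Type*} (p1 : Bool → Y1 → ℝ) (p2 : Bool → Y2 → ℝ) :
    Bool → Y1 × Y2 → ℝ :=
  fun z y => ∑ x : Bool, p1 x y.1 * p2 (Bool.xor x z) y.2

/-- `k_∞^A(p) = max{p, 1-p}`. -/
def kInf (p : ℝ) : ℝ := max p (1 - p)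

/-- Binary min-entropy `h_∞(p) = -log max{p, 1-p}`. -/
def binHInf (p : ℝ) : ℝ := - Real.log (max p (1 - p))

/-- Inverse of the restriction of `h_∞` to `[0,1/2]`. -/
def binHInfInv : ℝ → ℝ := Function.invFunOn binHInf (Set.Icc 0 (1/2))

/-- Conditional min-entropy `H_∞(X|Y)` for binary `X`. -/
def condInf {Y : Type*} [Fintype Y] (p : Bool → Y → ℝ) : ℝ :=
  - Real.log (∑ y, margY p y * max (p false y / margY p y) (p true y / margY p y))

/-- Unconditional Rényi entropy of a finitely supported distribution. -/
def renyiEnt (α : ℝ) {X : Type*} [Fintype X] (p : X → ℝ) : ℝ :=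
  (1 / (1 - α)) * Real.log (∑ x, p x ^ α)

/-- Distribution of the mod-2 sum of two independent binary random variables. -/
def sumDist (p1 p2 : Bool → ℝ) : Bool → ℝ := fun z => ∑ x : Bool, p1 x * p2 (Bool.xor x z)

/-!
The quantity `K(p) = KA α p` equals `∑_y p(y) k_α^A(p(1|y))`; moreover
`H_α^A(X|Y) = α/(1-α) · log K(p)` and `h_α⁻¹(H_α^A(X|Y)) = (k_α^A)⁻¹(K(p))`. Given `(y₁, y₂)`, the law of `X₁ + X₂` is the binary
convolution of the two conditional laws, hence `K` of the combined pair is the average of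
`κ_α^A(k_α^A(p₁(1|y₁)), k_α^A(p₂(1|y₂)))` over `p₁(y₁) p₂(y₂)`. Jensen's inequality, applied in
each argument separately, compares this average with `κ_α^A(K(p₁), K(p₂))`, and the right-hand
side of the bound is `α/(1-α) · log κ_α^A(K(p₁), K(p₂))`; the sign of `α/(1-α)` fixes the
direction of the inequality.
-/

lemma map_sum_sum_le_of_separately_convexOn {ι κ E F : Type*} [AddCommGroup E] [Module ℝ E]
    [AddCommGroup F] [Module ℝ F] {s : Set E} {t : Set F} {f : E → F → ℝ}
    (hfx : ∀ y ∈ t, ConvexOn ℝ s (f · y)) (hfy : ∀ x ∈ s, ConvexOn ℝ t (f x))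
    {u : Finset ι} {v : Finset κ} {w : ι → ℝ} {w' : κ → ℝ} {a : ι → E} {b : κ → F}
    (hw : ∀ i ∈ u, 0 ≤ w i) (hw' : ∀ j ∈ v, 0 ≤ w' j)
    (hw₁ : ∑ i ∈ u, w i = 1) (hw'₁ : ∑ j ∈ v, w' j = 1)
    (ha : ∀ i ∈ u, a i ∈ s) (hb : ∀ j ∈ v, b j ∈ t) :
    f (∑ i ∈ u, w i • a i) (∑ j ∈ v, w' j • b j) ≤
      ∑ i ∈ u, ∑ j ∈ v, w i * w' j * f (a i) (b j) := by
  -- `t` is convex, being the domain of the convex function `f (a i₀)`.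
  obtain ⟨i₀, hi₀⟩ := Finset.nonempty_of_sum_ne_zero (hw₁.trans_ne one_ne_zero)
  have hb_mem : ∑ j ∈ v, w' j • b j ∈ t :=
    (hfy _ (ha i₀ hi₀)).1.sum_mem hw' hw'₁ hb
  calc f (∑ i ∈ u, w i • a i) (∑ j ∈ v, w' j • b j)
      ≤ ∑ i ∈ u, w i * f (a i) (∑ j ∈ v, w' j • b j) :=
        (hfx _ hb_mem).map_sum_le hw hw₁ ha
    _ ≤ ∑ i ∈ u, w i * ∑ j ∈ v, w' j * f (a i) (b j) :=
        Finset.sum_le_sum fun i hi => mul_le_mul_of_nonneg_left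
          ((hfy _ (ha i hi)).map_sum_le hw' hw'₁ hb) (hw i hi)
    _ = ∑ i ∈ u, ∑ j ∈ v, w i * w' j * f (a i) (b j) := by
        simp only [Finset.mul_sum, mul_assoc]

lemma le_map_sum_sum_of_separately_concaveOn {ι κ E F : Type*} [AddCommGroup E] [Module ℝ E]
    [AddCommGroup F] [Module ℝ F] {s : Set E} {t : Set F} {f : E → F → ℝ}
    (hfx : ∀ y ∈ t, ConcaveOn ℝ s (f · y)) (hfy : ∀ x ∈ s, ConcaveOn ℝ t (f x))
    {u : Finset ι} {v : Finset κ} {w : ι → ℝ} {w' : κ → ℝ} {a : ι → E} {b : κ → F}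
    (hw : ∀ i ∈ u, 0 ≤ w i) (hw' : ∀ j ∈ v, 0 ≤ w' j)
    (hw₁ : ∑ i ∈ u, w i = 1) (hw'₁ : ∑ j ∈ v, w' j = 1)
    (ha : ∀ i ∈ u, a i ∈ s) (hb : ∀ j ∈ v, b j ∈ t) :
    ∑ i ∈ u, ∑ j ∈ v, w i * w' j * f (a i) (b j) ≤
      f (∑ i ∈ u, w i • a i) (∑ j ∈ v, w' j • b j) := by
  have := map_sum_sum_le_of_separately_convexOn (f := fun x y => -f x y)
    (fun y hy => (hfx y hy).neg) (fun x hx => (hfy x hx).neg) hw hw' hw₁ hw'₁ ha hb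
  simpa only [mul_neg, Finset.sum_neg_distrib, neg_le_neg_iff] using this

lemma bconv_one_sub_left (a b : ℝ) : bconv (1 - a) b = 1 - bconv a b := by
  unfold bconv; ring

lemma bconv_one_sub_right (a b : ℝ) : bconv a (1 - b) = 1 - bconv a b := by
  unfold bconv; ring

lemma bconv_mem_Icc {a b : ℝ} (ha : a ∈ Set.Icc (0 : ℝ) 1) (hb : b ∈ Set.Icc (0 : ℝ) 1) :
    bconv a b ∈ Set.Icc (0 : ℝ) 1 := by
  obtain ⟨ha₀, ha₁⟩ := ha
  obtain ⟨hb₀, hb₁⟩ := hb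
  unfold bconv
  constructor <;> nlinarith

section BinaryFunctions

variable {α : ℝ}

lemma Icc_half_subset_Icc_one : Set.Icc (0 : ℝ) (1 / 2) ⊆ Set.Icc 0 1 :=
  Set.Icc_subset_Icc le_rfl (by norm_num)

lemma kH_pos (hα : 0 < α) {t : ℝ} (ht : t ∈ Set.Icc (0 : ℝ) 1) : 0 < kH α t := by
  rcases ht.1.eq_or_lt with rfl | h
  · simp [kH, Real.zero_rpow hα.ne']
  · exact add_pos_of_pos_of_nonneg (Real.rpow_pos_of_pos h α)
      (Real.rpow_nonneg (by linarith [ht.2]) α)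

lemma kA_pos (hα : 0 < α) {t : ℝ} (ht : t ∈ Set.Icc (0 : ℝ) 1) : 0 < kA α t :=
  Real.rpow_pos_of_pos (kH_pos hα ht) _

lemma kA_one_sub (t : ℝ) : kA α (1 - t) = kA α t := by
  unfold kA; rw [sub_sub_cancel, add_comm]

lemma kA_bconv_one_sub_left (a b : ℝ) : kA α (bconv (1 - a) b) = kA α (bconv a b) := by
  rw [bconv_one_sub_left, kA_one_sub]

lemma kA_bconv_one_sub_right (a b : ℝ) : kA α (bconv a (1 - b)) = kA α (bconv a b) := by
  rw [bconv_one_sub_right, kA_one_sub]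

lemma kA_zero (hα : 0 < α) : kA α 0 = 1 := by
  simp [kA, Real.zero_rpow hα.ne']

lemma kA_half : kA α (1 / 2) = deltaA α := by
  have h2 : (0 : ℝ) ≤ 2 := by norm_num
  unfold kA deltaA
  rw [show (1 : ℝ) - 1 / 2 = 1 / 2 by norm_num, one_div, Real.inv_rpow h2,
    show ((2 : ℝ) ^ α)⁻¹ + (2 ^ α)⁻¹ = 2 ^ (1 - α) by
      rw [Real.rpow_sub (by norm_num), Real.rpow_one]; ring,
    ← Real.rpow_mul h2, one_div, div_eq_mul_inv]

lemma continuous_kH (hα : 0 < α) : Continuous (kH α) :=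
  (Real.continuous_rpow_const hα.le).add
    ((Real.continuous_rpow_const hα.le).comp (continuous_const.sub continuous_id))

lemma continuous_kA (hα : 0 < α) : Continuous (kA α) :=
  (Real.continuous_rpow_const (by positivity)).comp (continuous_kH hα)

lemma hasDerivAt_kH {t : ℝ} (h₀ : t ≠ 0) (h₁ : t ≠ 1) :
    HasDerivAt (kH α) (α * t ^ (α - 1) - α * (1 - t) ^ (α - 1)) t := by
  have h₁' : 1 - t ≠ 0 := sub_ne_zero.mpr h₁.symm
  exact ((Real.hasDerivAt_rpow_const (p := α) (Or.inl h₀)).add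
    ((Real.hasDerivAt_rpow_const (p := α) (Or.inl h₁')).comp t
      ((hasDerivAt_id t).const_sub 1))).congr_deriv (by ring)

lemma deriv_kH_of_mem_Ioo {t : ℝ} (ht : t ∈ Set.Ioo (0 : ℝ) (1 / 2)) :
    deriv (kH α) t = α * (t ^ (α - 1) - (1 - t) ^ (α - 1)) := by
  rw [(hasDerivAt_kH ht.1.ne' (by linarith [ht.2])).deriv]
  ring

lemma kH_strictMonoOn_of_lt_one (hα : 0 < α) (hα1 : α < 1) :
    StrictMonoOn (kH α) (Set.Icc 0 (1 / 2)) := by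
  refine strictMonoOn_of_deriv_pos (convex_Icc _ _) (continuous_kH hα).continuousOn
    fun t ht => ?_
  rw [interior_Icc] at ht
  rw [deriv_kH_of_mem_Ioo ht]
  exact mul_pos hα (sub_pos.mpr
      (Real.rpow_lt_rpow_of_neg ht.1 (by linarith [ht.2]) (by linarith)))

lemma kH_strictAntiOn_of_one_lt (hα1 : 1 < α) :
    StrictAntiOn (kH α) (Set.Icc 0 (1 / 2)) := by
  refine strictAntiOn_of_deriv_neg (convex_Icc _ _) (continuous_kH (by linarith)).continuousOn
    fun t ht => ?_
  rw [interior_Icc] at ht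
  rw [deriv_kH_of_mem_Ioo ht]
  exact mul_neg_of_pos_of_neg (by linarith) (sub_neg.mpr
    (Real.rpow_lt_rpow ht.1.le (by linarith [ht.2]) (by linarith)))

lemma kA_strictMonoOn_of_lt_one (hα : 0 < α) (hα1 : α < 1) :
    StrictMonoOn (kA α) (Set.Icc 0 (1 / 2)) := fun _ hs _ ht hst =>
  Real.rpow_lt_rpow (kH_pos hα (Icc_half_subset_Icc_one hs)).le
    (kH_strictMonoOn_of_lt_one hα hα1 hs ht hst) (by positivity)

lemma kA_strictAntiOn_of_one_lt (hα1 : 1 < α) :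
    StrictAntiOn (kA α) (Set.Icc 0 (1 / 2)) := fun _ hs _ ht hst =>
  Real.rpow_lt_rpow (kH_pos (by linarith) (Icc_half_subset_Icc_one ht)).le
    (kH_strictAntiOn_of_one_lt hα1 hs ht hst) (one_div_pos.mpr (by linarith))

lemma kA_injOn (hα : 0 < α) (hα1 : α ≠ 1) : Set.InjOn (kA α) (Set.Icc 0 (1 / 2)) := by
  rcases hα1.lt_or_gt with h | h
  · exact (kA_strictMonoOn_of_lt_one hα h).injOn
  · exact (kA_strictAntiOn_of_one_lt h).injOn

lemma kA_image_Icc_half (hα : 0 < α) (hα1 : α ≠ 1) : kA α '' Set.Icc 0 (1 / 2) = IA α := by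
  have e : Set.uIcc (0 : ℝ) (1 / 2) = Set.Icc 0 (1 / 2) := Set.uIcc_of_le (by norm_num)
  have hc := (continuous_kA hα).continuousOn (s := Set.uIcc 0 (1 / 2))
  rw [IA, ← e]
  rcases hα1.lt_or_gt with h | h
  · rw [hc.image_uIcc_of_monotoneOn (e ▸ (kA_strictMonoOn_of_lt_one hα h).monotoneOn),
      kA_zero hα, kA_half]
  · rw [hc.image_uIcc_of_antitoneOn (e ▸ (kA_strictAntiOn_of_one_lt h).antitoneOn),
      kA_zero hα, kA_half]

lemma kA_mem_IA (hα : 0 < α) (hα1 : α ≠ 1) {t : ℝ} (ht : t ∈ Set.Icc (0 : ℝ) 1) :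
    kA α t ∈ IA α := by
  rw [← kA_image_Icc_half hα hα1]
  rcases le_or_gt t (1 / 2) with h | h
  · exact ⟨t, ⟨ht.1, h⟩, rfl⟩
  · exact ⟨1 - t, ⟨by linarith [ht.2], by linarith⟩, kA_one_sub t⟩

lemma pos_of_mem_IA {x : ℝ} (hx : x ∈ IA α) : 0 < x := by
  have hδ : 0 < deltaA α := Real.rpow_pos_of_pos two_pos _
  rcases Set.mem_uIcc.mp hx with ⟨h, _⟩ | ⟨h, _⟩ <;> linarith

lemma kAInv_mem_Icc (hα : 0 < α) (hα1 : α ≠ 1) {x : ℝ} (hx : x ∈ IA α) :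
    kAInv α x ∈ Set.Icc (0 : ℝ) (1 / 2) := by
  rw [← kA_image_Icc_half hα hα1] at hx
  exact Function.invFunOn_mem hx

lemma kA_kAInv (hα : 0 < α) (hα1 : α ≠ 1) {x : ℝ} (hx : x ∈ IA α) : kA α (kAInv α x) = x := by
  rw [← kA_image_Icc_half hα hα1] at hx
  exact Function.invFunOn_eq hx

lemma kAInv_kA (hα : 0 < α) (hα1 : α ≠ 1) {t : ℝ} (ht : t ∈ Set.Icc (0 : ℝ) (1 / 2)) :
    kAInv α (kA α t) = t :=
  (kA_injOn hα hα1).leftInvOn_invFunOn ht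

lemma kAInv_kA_eq_or_eq_one_sub (hα : 0 < α) (hα1 : α ≠ 1) {t : ℝ}
    (ht : t ∈ Set.Icc (0 : ℝ) 1) : kAInv α (kA α t) = t ∨ kAInv α (kA α t) = 1 - t := by
  rcases le_or_gt t (1 / 2) with h | h
  · exact Or.inl (kAInv_kA hα hα1 ⟨ht.1, h⟩)
  · right
    rw [← kA_one_sub]
    exact kAInv_kA hα hα1 ⟨by linarith [ht.2], by linarith⟩

lemma kkA_kA_kA (hα : 0 < α) (hα1 : α ≠ 1) {t₁ t₂ : ℝ} (h₁ : t₁ ∈ Set.Icc (0 : ℝ) 1)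
    (h₂ : t₂ ∈ Set.Icc (0 : ℝ) 1) : kkA α (kA α t₁) (kA α t₂) = kA α (bconv t₁ t₂) := by
  unfold kkA
  rcases kAInv_kA_eq_or_eq_one_sub hα hα1 h₁ with e₁ | e₁ <;>
  rcases kAInv_kA_eq_or_eq_one_sub hα hα1 h₂ with e₂ | e₂ <;>
  simp only [e₁, e₂, kA_bconv_one_sub_left, kA_bconv_one_sub_right]

lemma bconv_kAInv_mem_Icc (hα : 0 < α) (hα1 : α ≠ 1) {x y : ℝ} (hx : x ∈ IA α)
    (hy : y ∈ IA α) : bconv (kAInv α x) (kAInv α y) ∈ Set.Icc (0 : ℝ) 1 :=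
  bconv_mem_Icc (Icc_half_subset_Icc_one (kAInv_mem_Icc hα hα1 hx))
    (Icc_half_subset_Icc_one (kAInv_mem_Icc hα hα1 hy))

lemma kkA_pos (hα : 0 < α) (hα1 : α ≠ 1) {x y : ℝ} (hx : x ∈ IA α) (hy : y ∈ IA α) :
    0 < kkA α x y :=
  kA_pos hα (bconv_kAInv_mem_Icc hα hα1 hx hy)

lemma binH_eq_mul_log_kA (hα : 0 < α) (hα1 : α ≠ 1) {t : ℝ} (ht : t ∈ Set.Icc (0 : ℝ) 1) :
    binH α t = α / (1 - α) * Real.log (kA α t) := by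
  have h1α : 1 - α ≠ 0 := sub_ne_zero.mpr hα1.symm
  show 1 / (1 - α) * Real.log (kH α t) = α / (1 - α) * Real.log (kH α t ^ (1 / α))
  rw [Real.log_rpow (kH_pos hα ht), ← mul_assoc]
  congr 1
  field_simp

lemma binH_injOn (hα : 0 < α) (hα1 : α ≠ 1) : Set.InjOn (binH α) (Set.Icc 0 (1 / 2)) := by
  intro s hs t ht h
  have h1α : 1 - α ≠ 0 := sub_ne_zero.mpr hα1.symm
  have hs' := Icc_half_subset_Icc_one hs
  have ht' := Icc_half_subset_Icc_one ht
  rw [binH_eq_mul_log_kA hα hα1 hs', binH_eq_mul_log_kA hα hα1 ht'] at h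
  exact kA_injOn hα hα1 hs ht <| Real.log_injOn_pos (kA_pos hα hs') (kA_pos hα ht') <|
    mul_left_cancel₀ (div_ne_zero hα.ne' h1α) h

lemma binHInv_mul_log (hα : 0 < α) (hα1 : α ≠ 1) {x : ℝ} (hx : x ∈ IA α) :
    binHInv α (α / (1 - α) * Real.log x) = kAInv α x := by
  have hmem := kAInv_mem_Icc hα hα1 hx
  have hx' : α / (1 - α) * Real.log x = binH α (kAInv α x) := by
    rw [binH_eq_mul_log_kA hα hα1 (Icc_half_subset_Icc_one hmem), kA_kAInv hα hα1 hx]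
  rw [hx']
  exact (binH_injOn hα hα1).leftInvOn_invFunOn hmem

end BinaryFunctions

section ConditionalEntropy

variable {α : ℝ} {Y Y₁ Y₂ : Type*}

lemma margY_nonneg [Fintype Y] {p : Bool → Y → ℝ} (hp : IsPmf p) (y : Y) : 0 ≤ margY p y :=
  Finset.sum_nonneg fun x _ => hp.1 x y

lemma sum_margY [Fintype Y] {p : Bool → Y → ℝ} (hp : IsPmf p) : ∑ y, margY p y = 1 := by
  unfold margY
  rw [Finset.sum_comm]
  exact hp.2

lemma margY_eq_add (p : Bool → Y → ℝ) (y : Y) : margY p y = p true y + p false y := by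
  simp [margY, add_comm]

lemma div_margY_mem_Icc [Fintype Y] {p : Bool → Y → ℝ} (hp : IsPmf p) (y : Y) :
    p true y / margY p y ∈ Set.Icc (0 : ℝ) 1 :=
  ⟨div_nonneg (hp.1 true y) (margY_nonneg hp y),
    div_le_one_of_le₀ (by rw [margY_eq_add]; linarith [hp.1 false y]) (margY_nonneg hp y)⟩

lemma sum_margY_mul_kA_mem_IA [Fintype Y] (hα : 0 < α) (hα1 : α ≠ 1) {p : Bool → Y → ℝ}
    (hp : IsPmf p) : ∑ y, margY p y * kA α (p true y / margY p y) ∈ IA α := by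
  have hconv : Convex ℝ (IA α) := convex_uIcc _ _
  simpa only [smul_eq_mul] using hconv.sum_mem
    (fun y _ => margY_nonneg hp y) (sum_margY hp)
    (fun y _ => kA_mem_IA hα hα1 (div_margY_mem_Icc hp y))

lemma sum_margY_mul_rpow_eq [Fintype Y] (p : Bool → Y → ℝ) :
    ∑ y, margY p y * (∑ x, (p x y / margY p y) ^ α) ^ (1 / α) =
      ∑ y, margY p y * kA α (p true y / margY p y) := by
  refine Finset.sum_congr rfl fun y _ => ?_
  rcases eq_or_ne (margY p y) 0 with h | h
  · simp [h]
  have hfalse : p false y / margY p y = 1 - p true y / margY p y := by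
    field_simp
    rw [margY_eq_add]
    ring
  rw [Fintype.sum_bool, hfalse, kA]

lemma KA_eq_sum [Fintype Y] (hα : 0 < α) (hα1 : α ≠ 1) {p : Bool → Y → ℝ} (hp : IsPmf p) :
    KA α p = ∑ y, margY p y * kA α (p true y / margY p y) := by
  have h1α : 1 - α ≠ 0 := sub_ne_zero.mpr hα1.symm
  have hpos := pos_of_mem_IA (sum_margY_mul_kA_mem_IA hα hα1 hp)
  rw [KA, condA, sum_margY_mul_rpow_eq, ← mul_assoc,
    show (1 - α) / α * (α / (1 - α)) = 1 by field_simp, one_mul, Real.exp_log hpos]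

lemma condA_eq_mul_log_KA [Fintype Y] (hα : α ≠ 0) (hα1 : α ≠ 1) (p : Bool → Y → ℝ) :
    condA α p = α / (1 - α) * Real.log (KA α p) := by
  have h1α : 1 - α ≠ 0 := sub_ne_zero.mpr hα1.symm
  rw [KA, Real.log_exp]
  field_simp

lemma KA_mem_IA [Fintype Y] (hα : 0 < α) (hα1 : α ≠ 1) {p : Bool → Y → ℝ} (hp : IsPmf p) :
    KA α p ∈ IA α := by
  rw [KA_eq_sum hα hα1 hp]
  exact sum_margY_mul_kA_mem_IA hα hα1 hp

lemma binHInv_condA [Fintype Y] (hα : 0 < α) (hα1 : α ≠ 1) {p : Bool → Y → ℝ} (hp : IsPmf p) :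
    binHInv α (condA α p) = kAInv α (KA α p) := by
  rw [condA_eq_mul_log_KA hα.ne' hα1, binHInv_mul_log hα hα1 (KA_mem_IA hα hα1 hp)]

lemma margY_combine (p₁ : Bool → Y₁ → ℝ) (p₂ : Bool → Y₂ → ℝ) (y : Y₁ × Y₂) :
    margY (combine p₁ p₂) y = margY p₁ y.1 * margY p₂ y.2 := by
  simp only [margY, combine, Fintype.sum_bool, Bool.true_xor, Bool.false_xor,
    Bool.not_true, Bool.not_false]
  ring

lemma combine_isPmf [Fintype Y₁] [Fintype Y₂] {p₁ : Bool → Y₁ → ℝ} {p₂ : Bool → Y₂ → ℝ}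
    (hp₁ : IsPmf p₁) (hp₂ : IsPmf p₂) : IsPmf (combine p₁ p₂) := by
  refine ⟨fun x y => Finset.sum_nonneg fun z _ => mul_nonneg (hp₁.1 z y.1) (hp₂.1 _ y.2), ?_⟩
  calc ∑ x, ∑ y, combine p₁ p₂ x y = ∑ y, margY (combine p₁ p₂) y := Finset.sum_comm
    _ = (∑ y₁, margY p₁ y₁) * ∑ y₂, margY p₂ y₂ := by
      rw [Finset.sum_mul_sum, ← Fintype.sum_prod_type']
      exact Finset.sum_congr rfl fun y _ => margY_combine p₁ p₂ y
    _ = 1 := by rw [sum_margY hp₁, sum_margY hp₂, one_mul]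

lemma combine_true_div_margY {p₁ : Bool → Y₁ → ℝ} {p₂ : Bool → Y₂ → ℝ} {y₁ : Y₁} {y₂ : Y₂}
    (h₁ : margY p₁ y₁ ≠ 0) (h₂ : margY p₂ y₂ ≠ 0) :
    combine p₁ p₂ true (y₁, y₂) / margY (combine p₁ p₂) (y₁, y₂) =
      bconv (p₁ true y₁ / margY p₁ y₁) (p₂ true y₂ / margY p₂ y₂) := by
  rw [margY_combine]
  have e₁ : p₁ false y₁ = margY p₁ y₁ - p₁ true y₁ := by rw [margY_eq_add]; ring
  have e₂ : p₂ false y₂ = margY p₂ y₂ - p₂ true y₂ := by rw [margY_eq_add]; ring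
  simp only [combine, Fintype.sum_bool, Bool.true_xor, Bool.false_xor, Bool.not_true]
  rw [e₁, e₂, bconv]
  field_simp

lemma KA_combine [Fintype Y₁] [Fintype Y₂] (hα : 0 < α) (hα1 : α ≠ 1) {p₁ : Bool → Y₁ → ℝ} {p₂ : Bool → Y₂ → ℝ}
    (hp₁ : IsPmf p₁) (hp₂ : IsPmf p₂) :
    KA α (combine p₁ p₂) = ∑ y₁, ∑ y₂, margY p₁ y₁ * margY p₂ y₂ *
      kkA α (kA α (p₁ true y₁ / margY p₁ y₁)) (kA α (p₂ true y₂ / margY p₂ y₂)) := by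
  rw [KA_eq_sum hα hα1 (combine_isPmf hp₁ hp₂), Fintype.sum_prod_type]
  refine Finset.sum_congr rfl fun y₁ _ => Finset.sum_congr rfl fun y₂ _ => ?_
  rw [margY_combine]
  rcases eq_or_ne (margY p₁ y₁) 0 with h₁ | h₁
  · simp [h₁]
  rcases eq_or_ne (margY p₂ y₂) 0 with h₂ | h₂
  · simp [h₂]
  rw [← margY_combine, combine_true_div_margY h₁ h₂,
    kkA_kA_kA hα hα1 (div_margY_mem_Icc hp₁ y₁) (div_margY_mem_Icc hp₂ y₂)]

lemma kkA_KA_le_KA_combine [Fintype Y₁] [Fintype Y₂] (hα : 0 < α) (hα1 : α ≠ 1)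
    {p₁ : Bool → Y₁ → ℝ} {p₂ : Bool → Y₂ → ℝ} (hp₁ : IsPmf p₁) (hp₂ : IsPmf p₂)
    (hx : ∀ y ∈ IA α, ConvexOn ℝ (IA α) (fun x => kkA α x y))
    (hy : ∀ x ∈ IA α, ConvexOn ℝ (IA α) (fun y => kkA α x y)) :
    kkA α (KA α p₁) (KA α p₂) ≤ KA α (combine p₁ p₂) := by
  rw [KA_combine hα hα1 hp₁ hp₂, KA_eq_sum hα hα1 hp₁, KA_eq_sum hα hα1 hp₂]
  simpa only [smul_eq_mul] using map_sum_sum_le_of_separately_convexOn hx hy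
    (fun y _ => margY_nonneg hp₁ y) (fun y _ => margY_nonneg hp₂ y)
    (sum_margY hp₁) (sum_margY hp₂)
    (fun y _ => kA_mem_IA hα hα1 (div_margY_mem_Icc hp₁ y))
    (fun y _ => kA_mem_IA hα hα1 (div_margY_mem_Icc hp₂ y))

lemma KA_combine_le_kkA_KA [Fintype Y₁] [Fintype Y₂] (hα : 0 < α) (hα1 : α ≠ 1)
    {p₁ : Bool → Y₁ → ℝ} {p₂ : Bool → Y₂ → ℝ} (hp₁ : IsPmf p₁) (hp₂ : IsPmf p₂)
    (hx : ∀ y ∈ IA α, ConcaveOn ℝ (IA α) (fun x => kkA α x y))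
    (hy : ∀ x ∈ IA α, ConcaveOn ℝ (IA α) (fun y => kkA α x y)) :
    KA α (combine p₁ p₂) ≤ kkA α (KA α p₁) (KA α p₂) := by
  rw [KA_combine hα hα1 hp₁ hp₂, KA_eq_sum hα hα1 hp₁, KA_eq_sum hα hα1 hp₂]
  simpa only [smul_eq_mul] using le_map_sum_sum_of_separately_concaveOn hx hy
    (fun y _ => margY_nonneg hp₁ y) (fun y _ => margY_nonneg hp₂ y)
    (sum_margY hp₁) (sum_margY hp₂)
    (fun y _ => kA_mem_IA hα hα1 (div_margY_mem_Icc hp₁ y))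
    (fun y _ => kA_mem_IA hα hα1 (div_margY_mem_Icc hp₂ y))

lemma binH_bconv_binHInv_condA [Fintype Y₁] [Fintype Y₂] (hα : 0 < α) (hα1 : α ≠ 1)
    {p₁ : Bool → Y₁ → ℝ} {p₂ : Bool → Y₂ → ℝ} (hp₁ : IsPmf p₁) (hp₂ : IsPmf p₂) :
    binH α (bconv (binHInv α (condA α p₁)) (binHInv α (condA α p₂))) =
      α / (1 - α) * Real.log (kkA α (KA α p₁) (KA α p₂)) := by
  rw [binHInv_condA hα hα1 hp₁, binHInv_condA hα hα1 hp₂, binH_eq_mul_log_kA hα hα1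
    (bconv_kAInv_mem_Icc hα hα1 (KA_mem_IA hα hα1 hp₁) (KA_mem_IA hα hα1 hp₂)), kkA]

end ConditionalEntropy

/-- BSC-bound for the Arimoto conditional Rényi entropy. -/
theorem stmt_1 (α : ℝ) (hα : 0 < α) (hα1 : α ≠ 1)
    {Y1 Y2 : Type*} [Fintype Y1] [Fintype Y2]
    (p1 : Bool → Y1 → ℝ) (p2 : Bool → Y2 → ℝ)
    (hp1 : IsPmf p1) (hp2 : IsPmf p2) :
    (((∀ y ∈ IA α, ConvexOn ℝ (IA α) (fun x => kkA α x y)) ∧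
      (∀ x ∈ IA α, ConvexOn ℝ (IA α) (fun y => kkA α x y))) →
      (1 < α → condA α (combine p1 p2) ≤
          binH α (bconv (binHInv α (condA α p1)) (binHInv α (condA α p2)))) ∧
      (α < 1 → binH α (bconv (binHInv α (condA α p1)) (binHInv α (condA α p2))) ≤
          condA α (combine p1 p2))) ∧
    (((∀ y ∈ IA α, ConcaveOn ℝ (IA α) (fun x => kkA α x y)) ∧
      (∀ x ∈ IA α, ConcaveOn ℝ (IA α) (fun y => kkA α x y))) →
      (1 < α → binH α (bconv (binHInv α (condA α p1)) (binHInv α (condA α p2))) ≤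
          condA α (combine p1 p2)) ∧
      (α < 1 → condA α (combine p1 p2) ≤
          binH α (bconv (binHInv α (condA α p1)) (binHInv α (condA α p2))))) := by
  rw [binH_bconv_binHInv_condA hα hα1 hp1 hp2, condA_eq_mul_log_KA hα.ne' hα1]
  set c := α / (1 - α)
  set K := kkA α (KA α p1) (KA α p2)
  set Kc := KA α (combine p1 p2)
  have hK : 0 < K := kkA_pos hα hα1 (KA_mem_IA hα hα1 hp1) (KA_mem_IA hα hα1 hp2)
  have hKc : 0 < Kc := pos_of_mem_IA (KA_mem_IA hα hα1 (combine_isPmf hp1 hp2))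
  have hc_neg (h : 1 < α) : c ≤ 0 := div_nonpos_of_nonneg_of_nonpos hα.le (by linarith)
  have hc_pos (h : α < 1) : 0 ≤ c := div_nonneg hα.le (by linarith)
  refine ⟨fun ⟨hx, hy⟩ => ?_, fun ⟨hx, hy⟩ => ?_⟩
  · have hlog := Real.log_le_log hK (kkA_KA_le_KA_combine hα hα1 hp1 hp2 hx hy)
    exact ⟨fun h => mul_le_mul_of_nonpos_left hlog (hc_neg h),
      fun h => mul_le_mul_of_nonneg_left hlog (hc_pos h)⟩
  · have hlog := Real.log_le_log hKc (KA_combine_le_kkA_KA hα hα1 hp1 hp2 hx hy)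
    exact ⟨fun h => mul_le_mul_of_nonpos_left hlog (hc_neg h),
      fun h => mul_le_mul_of_nonneg_left hlog (hc_pos h)⟩
end
end

section
/- For every α ≥ 2 and every fixed y ∈ I_α^A, the function x ↦ κ_α^A(x,y) = k_α^A( (k_α^A)^{-1}(x) ∗ (k_α^A)^{-1}(y) ) is convex on I_α^A, and symmetrically it is convex in y for every fixed x ∈ I_α^A. -/
open Real

noncomputable section

/-!
In the coordinate `t = 1 - 2p` one has `2 k_α^A(p) = φ(t) := ((1+t)^α + (1-t)^α)^{1/α}`
(`pairNorm`), and binary convolution becomes multiplication: `1 - 2 (p ∗ q) = (1 - 2p)(1 - 2q)`.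
Hence, with `v = 1 - 2 (k_α^A)⁻¹(y) ∈ [0,1]`, `x ↦ κ_α^A(x,y)` is `t ↦ φ(v t)/2` read through the
increasing inverse of `φ/2`, and its derivative at `x = φ(t)/2` is `v φ'(v t) / φ'(t)`. So
convexity amounts to `t ↦ φ'(v t) / φ'(t)` being increasing on `(0,1)`.

Writing `N`, `A` for `(1+t)^α + (1-t)^α` and `(1+t)^{α-1} - (1-t)^{α-1}` (`powSum`, `powDiff`),
`φ' = N^{1/α-1} A` and `φ'' = 4(α-1) N^{1/α-2} (1-t²)^{α-2}`, which reduces this to monotonicity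
of `N A / (t (1-t²)^{α-2})`. That function is `((1+t)^β - (1-t)^β) / (t (1-t²)^{α-2}) - 2(1-t²)`
with `β = 2α - 1 ≥ 3`, and the derivative of the first term has the sign of
`(1+t)^β (β t - 1 - 2t²) + (1-t)^β (β t + 1 + 2t²)`. This is `4t³(1-t²) ≥ 0` at `β = 3`, and in
logarithmic form it increases with `β` because `log (1+t) - log (1-t) ≤ 2t / (1-t²)`.
The second claim follows from the symmetry of `∗`.
-/

open Set Function

theorem ContinuousOn.invFunOn_image {X Y : Type*} [TopologicalSpace X] [TopologicalSpace Y]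
    [T2Space Y] [Nonempty X] {f : X → Y} {s : Set X} (hs : IsCompact s) (hf : ContinuousOn f s)
    (hinj : InjOn f s) : ContinuousOn (invFunOn f s) (f '' s) := by
  have : CompactSpace s := isCompact_iff_compactSpace.1 hs
  have hemb : Topology.IsClosedEmbedding (s.domRestrict f) :=
    hf.domRestrict.isClosedEmbedding (injOn_iff_injective.1 hinj)
  let e : f '' s → s := fun y => ⟨invFunOn f s y, invFunOn_mem y.2⟩
  have he : Continuous e := by
    rw [hemb.isEmbedding.continuous_iff]
    convert continuous_subtype_val using 1
    ext y
    exact invFunOn_eq y.2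
  rw [continuousOn_iff_continuous_domRestrict]
  exact continuous_subtype_val.comp he

theorem convexOn_comp_of_rightInvOn {e g h g' h' : ℝ → ℝ} {a b : ℝ} {U : Set ℝ}
    (he : ContinuousOn e (Icc a b)) (he_mono : MonotoneOn e (Ioo a b))
    (heU : MapsTo e (Ioo a b) U) (hge : RightInvOn e g (Ioo a b))
    (hg : ∀ t ∈ U, HasDerivAt g (g' t) t) (hg' : ∀ t ∈ U, g' t ≠ 0)
    (hh_cont : Continuous h) (hh : ∀ t ∈ U, HasDerivAt h (h' t) t)
    (hratio : MonotoneOn (fun t => h' t / g' t) U) :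
    ConvexOn ℝ (Icc a b) (h ∘ e) := by
  have hderiv : ∀ x ∈ Ioo a b, HasDerivAt (h ∘ e) (h' (e x) / g' (e x)) x := by
    intro x hx
    have hex : HasDerivAt e (g' (e x))⁻¹ x :=
      .of_local_left_inverse (he.continuousAt (Icc_mem_nhds hx.1 hx.2)) (hg _ (heU hx))
        (hg' _ (heU hx)) (Filter.eventually_of_mem (isOpen_Ioo.mem_nhds hx) fun _ hy => hge hy)
    exact (hh _ (heU hx)).comp x hex
  refine MonotoneOn.convexOn_of_deriv (convex_Icc a b) (hh_cont.comp_continuousOn he) ?_ ?_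
  all_goals rw [interior_Icc]
  · exact fun x hx => (hderiv x hx).differentiableAt.differentiableWithinAt
  · intro x hx y hy hxy
    rw [(hderiv x hx).deriv, (hderiv y hy).deriv]
    exact hratio (heU hx) (heU hy) (he_mono hx hy hxy)

lemma rpow_eq_rpow_sub_mul_pow {x : ℝ} (hx : x ≠ 0) (β : ℝ) (n : ℕ) :
    x ^ β = x ^ (β - n) * x ^ n := by
  rw [← rpow_add_natCast hx, sub_add_cancel]

lemma hasDerivAt_one_add_rpow (β : ℝ) {t : ℝ} (ht : -1 < t) :
    HasDerivAt (fun t => (1 + t) ^ β) (β * (1 + t) ^ (β - 1)) t := by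
  simpa using ((hasDerivAt_id' t).const_add 1).rpow_const (p := β) (Or.inl (by linarith))

lemma hasDerivAt_one_sub_rpow (β : ℝ) {t : ℝ} (ht : t < 1) :
    HasDerivAt (fun t => (1 - t) ^ β) (-(β * (1 - t) ^ (β - 1))) t := by
  simpa using ((hasDerivAt_id' t).const_sub 1).rpow_const (p := β) (Or.inl (by linarith))

lemma log_one_add_sub_log_one_sub_le {u : ℝ} (hu0 : 0 ≤ u) (hu1 : u < 1) :
    log (1 + u) - log (1 - u) ≤ 2 * u / (1 - u ^ 2) := by
  have hgeom :=
    (hasSum_geometric_of_lt_one (sq_nonneg u) (by nlinarith : u ^ 2 < 1)).mul_left (2 * u)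
  rw [div_eq_mul_inv]
  refine hasSum_le (fun k => ?_) (hasSum_log_sub_log_of_abs_lt_one (by rwa [abs_of_nonneg hu0]))
    hgeom
  have hk : 1 / (2 * (k : ℝ) + 1) ≤ 1 := by
    rw [div_le_one (by positivity)]; linarith [k.cast_nonneg (α := ℝ)]
  have hpow : 2 * u * (u ^ 2) ^ k = 2 * u ^ (2 * k + 1) := by ring
  rw [hpow]
  have := pow_nonneg hu0 (2 * k + 1)
  nlinarith

/-- The logarithm of `(1-u)^b (a+bu) / ((1+u)^b (a-bu))` for `a = 1 + 2u²`. -/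
lemma monotoneOn_log_rpow_ratio {u β : ℝ} (hu0 : 0 < u) (hu1 : u < 1)
    (hβ : β * u < 1 + 2 * u ^ 2) :
    MonotoneOn (fun b => b * (log (1 - u) - log (1 + u))
      + (log (1 + 2 * u ^ 2 + b * u) - log (1 + 2 * u ^ 2 - b * u))) (Icc 3 β) := by
  set a := 1 + 2 * u ^ 2
  have hderiv : ∀ b ∈ Icc 3 β, HasDerivAt (fun b => b * (log (1 - u) - log (1 + u))
      + (log (a + b * u) - log (a - b * u)))
      (log (1 - u) - log (1 + u) + (u / (a + b * u) - -u / (a - b * u))) b := by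
    intro b hb
    have hplus : 0 < a + b * u := by nlinarith [hb.1]
    have hminus : 0 < a - b * u := by nlinarith [hb.2]
    have hlog_plus : HasDerivAt (fun b => log (a + b * u)) (u / (a + b * u)) b :=
      ((hasDerivAt_mul_const u).const_add a).log hplus.ne'
    have hlog_minus : HasDerivAt (fun b => log (a - b * u)) (-u / (a - b * u)) b :=
      ((hasDerivAt_mul_const u).const_sub a).log hminus.ne'
    exact (hasDerivAt_mul_const _).add (hlog_plus.sub hlog_minus)
  refine monotoneOn_of_deriv_nonneg (convex_Icc 3 β)
    (fun b hb => (hderiv b hb).continuousAt.continuousWithinAt)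
    (fun b hb => (hderiv b (interior_subset hb)).differentiableAt.differentiableWithinAt)
    (fun b hb => ?_)
  have hb := interior_subset hb
  rw [(hderiv b hb).deriv]
  have hplus : 0 < a + b * u := by nlinarith [hb.1]
  have hminus : 0 < a - b * u := by nlinarith [hb.2]
  have h1u2 : 0 < 1 - u ^ 2 := by nlinarith
  have hsum : 2 * u / (1 - u ^ 2) ≤ u / (a + b * u) + u / (a - b * u) := by
    rw [div_add_div _ _ hplus.ne' hminus.ne', div_le_div_iff₀ h1u2 (by positivity)]
    have : 9 * u ^ 2 ≤ b ^ 2 * u ^ 2 :=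
      mul_le_mul_of_nonneg_right (by nlinarith [hb.1]) (sq_nonneg u)
    nlinarith [pow_pos hu0 3, pow_pos hu0 4]
  linarith [log_one_add_sub_log_one_sub_le hu0.le hu1, neg_div (a - b * u) u]

lemma one_add_rpow_mul_add_one_sub_rpow_mul_nonneg {u β : ℝ} (hu0 : 0 < u) (hu1 : u < 1)
    (hβ : 3 ≤ β) :
    0 ≤ (1 + u) ^ β * (β * u - 1 - 2 * u ^ 2) + (1 - u) ^ β * (β * u + 1 + 2 * u ^ 2) := by
  have hplus : 0 < 1 + u := by linarith
  have hminus : 0 < 1 - u := by linarith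
  rcases le_or_gt (1 + 2 * u ^ 2) (β * u) with h | h
  · have : 0 ≤ β * u + 1 + 2 * u ^ 2 := by positivity
    have : 0 ≤ β * u - 1 - 2 * u ^ 2 := by linarith
    positivity
  set a := 1 + 2 * u ^ 2
  have h3 : 0 < a - 3 * u := by nlinarith
  have hβa : 0 < a - β * u := by linarith
  have hβa' : 0 < a + β * u := by positivity
  have hpoly : (a - 3 * u) * (1 + u) ^ (3 : ℝ) ≤ (a + 3 * u) * (1 - u) ^ (3 : ℝ) := by
    have : (a + 3 * u) * (1 - u) ^ 3 - (a - 3 * u) * (1 + u) ^ 3 = 4 * u ^ 3 * (1 - u ^ 2) := by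
      ring
    norm_cast
    nlinarith [mul_pos (pow_pos hu0 3) (by nlinarith : (0 : ℝ) < 1 - u ^ 2)]
  have hmono := monotoneOn_log_rpow_ratio hu0 hu1 h ⟨le_rfl, hβ⟩ ⟨hβ, le_rfl⟩ hβ
  have hlog3 := log_le_log (by positivity) hpoly
  rw [log_mul h3.ne' (by positivity), log_mul (by positivity) (by positivity), log_rpow hplus,
    log_rpow hminus] at hlog3
  have hlogβ : log ((1 + u) ^ β * (a - β * u)) ≤ log ((1 - u) ^ β * (a + β * u)) := by
    rw [log_mul (by positivity) hβa.ne', log_mul (by positivity) hβa'.ne', log_rpow hplus,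
      log_rpow hminus]
    linarith
  have := (log_le_log_iff (by positivity) (by positivity)).1 hlogβ
  linarith

namespace KappaA

def powSum (α t : ℝ) : ℝ := (1 + t) ^ α + (1 - t) ^ α

def powDiff (α t : ℝ) : ℝ := (1 + t) ^ (α - 1) - (1 - t) ^ (α - 1)

def pairNorm (α t : ℝ) : ℝ := powSum α t ^ (1 / α)

def pairNormDeriv (α t : ℝ) : ℝ := powSum α t ^ (1 / α - 1) * powDiff α t

variable {α t : ℝ}

lemma powSum_pos (ht : t ∈ Ioo (-1) 1) : 0 < powSum α t :=
  add_pos (rpow_pos_of_pos (by linarith [ht.1]) _) (rpow_pos_of_pos (by linarith [ht.2]) _)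

lemma hasDerivAt_powSum (ht : t ∈ Ioo (-1) 1) :
    HasDerivAt (powSum α) (α * powDiff α t) t := by
  refine ((hasDerivAt_one_add_rpow α ht.1).add (hasDerivAt_one_sub_rpow α ht.2)).congr_deriv ?_
  unfold powDiff; ring

lemma hasDerivAt_powDiff (ht : t ∈ Ioo (-1) 1) :
    HasDerivAt (powDiff α) ((α - 1) * ((1 + t) ^ (α - 2) + (1 - t) ^ (α - 2))) t := by
  refine ((hasDerivAt_one_add_rpow (α - 1) ht.1).sub
    (hasDerivAt_one_sub_rpow (α - 1) ht.2)).congr_deriv ?_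
  ring_nf

lemma hasDerivAt_pairNorm (hα : α ≠ 0) (ht : t ∈ Ioo (-1) 1) :
    HasDerivAt (pairNorm α) (pairNormDeriv α t) t := by
  have h := (hasDerivAt_powSum (α := α) ht).rpow_const (p := 1 / α) (Or.inl (powSum_pos ht).ne')
  refine h.congr_deriv ?_
  unfold pairNormDeriv; field_simp

lemma powSum_mul_sub_powDiff_sq (ht : t ∈ Ioo (-1) 1) :
    powSum α t * ((1 + t) ^ (α - 2) + (1 - t) ^ (α - 2)) - powDiff α t ^ 2
      = 4 * (1 - t ^ 2) ^ (α - 2) := by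
  have ha : 1 + t ≠ 0 := by linarith [ht.1]
  have hb : 1 - t ≠ 0 := by linarith [ht.2]
  rw [show 1 - t ^ 2 = (1 + t) * (1 - t) by ring,
    mul_rpow (by linarith [ht.1]) (by linarith [ht.2]), powSum, powDiff,
    rpow_eq_rpow_sub_mul_pow ha α 2, rpow_eq_rpow_sub_mul_pow hb α 2,
    rpow_eq_rpow_sub_mul_pow ha (α - 1) 1, rpow_eq_rpow_sub_mul_pow hb (α - 1) 1]
  ring_nf

lemma hasDerivAt_pairNormDeriv (hα : α ≠ 0) (ht : t ∈ Ioo (-1) 1) :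
    HasDerivAt (pairNormDeriv α)
      (4 * (α - 1) * powSum α t ^ (1 / α - 2) * (1 - t ^ 2) ^ (α - 2)) t := by
  have hN := powSum_pos (α := α) ht
  refine (((hasDerivAt_powSum ht).rpow_const (p := 1 / α - 1) (Or.inl hN.ne')).mul
    (hasDerivAt_powDiff ht)).congr_deriv ?_
  have hpow : powSum α t ^ (1 / α - 1) = powSum α t ^ (1 / α - 2) * powSum α t := by
    rw [← rpow_add_one hN.ne']; ring_nf
  rw [show 1 / α - 1 - 1 = 1 / α - 2 by ring, hpow]
  have hα' : α * (1 / α - 1) = 1 - α := by field_simp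
  linear_combination powDiff α t ^ 2 * powSum α t ^ (1 / α - 2) * hα'
    + (α - 1) * powSum α t ^ (1 / α - 2) * powSum_mul_sub_powDiff_sq (α := α) ht

lemma powSum_mul_powDiff (ht : t ∈ Ioo (-1) 1) :
    powSum α t * powDiff α t
      = (1 + t) ^ (2 * α - 1) - (1 - t) ^ (2 * α - 1) - 2 * t * (1 - t ^ 2) ^ (α - 1) := by
  have ha : 0 < 1 + t := by linarith [ht.1]
  have hb : 0 < 1 - t := by linarith [ht.2]
  have hsplit : ∀ x : ℝ, 0 < x → x ^ (2 * α - 1) = x ^ (α - 1) * x ^ (α - 1) * x :=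
    fun x hx => by rw [← rpow_add hx, ← rpow_add_one hx.ne']; ring_nf
  rw [show 1 - t ^ 2 = (1 + t) * (1 - t) by ring, mul_rpow ha.le hb.le, powSum, powDiff,
    hsplit _ ha, hsplit _ hb, rpow_eq_rpow_sub_mul_pow ha.ne' α 1,
    rpow_eq_rpow_sub_mul_pow hb.ne' α 1]
  ring_nf

def oddQuot (α t : ℝ) : ℝ :=
  ((1 + t) ^ (2 * α - 1) - (1 - t) ^ (2 * α - 1)) / (t * (1 - t ^ 2) ^ (α - 2))

lemma hasDerivAt_oddQuot (ht : t ∈ Ioo 0 1) :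
    HasDerivAt (oddQuot α)
      ((1 - t ^ 2) ^ (α - 3) * ((1 + t) ^ (2 * α - 1) * ((2 * α - 1) * t - 1 - 2 * t ^ 2)
          + (1 - t) ^ (2 * α - 1) * ((2 * α - 1) * t + 1 + 2 * t ^ 2))
        / (t * (1 - t ^ 2) ^ (α - 2)) ^ 2) t := by
  have h1 : 0 < 1 - t ^ 2 := by nlinarith [ht.1, ht.2]
  have hp : 1 + t ≠ 0 := by linarith [ht.1]
  have hm : 1 - t ≠ 0 := by linarith [ht.2]
  have hnum := (hasDerivAt_one_add_rpow (2 * α - 1) (by linarith [ht.1])).sub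
    (hasDerivAt_one_sub_rpow (2 * α - 1) ht.2)
  have hden := (hasDerivAt_id' t).mul
    (((hasDerivAt_pow 2 t).const_sub 1).rpow_const (p := α - 2) (Or.inl h1.ne'))
  refine (hnum.div hden (mul_pos ht.1 (rpow_pos_of_pos h1 _)).ne').congr_deriv ?_
  simp only [Pi.sub_apply, Pi.mul_apply]
  congr 1
  rw [rpow_eq_rpow_sub_mul_pow hp (2 * α - 1) 1, rpow_eq_rpow_sub_mul_pow hm (2 * α - 1) 1,
    rpow_eq_rpow_sub_mul_pow h1.ne' (α - 2) 1]
  push_cast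
  ring_nf

lemma monotoneOn_oddQuot (hα : 2 ≤ α) : MonotoneOn (oddQuot α) (Ioo 0 1) := by
  refine monotoneOn_of_deriv_nonneg (convex_Ioo 0 1)
    (fun t ht => (hasDerivAt_oddQuot ht).continuousAt.continuousWithinAt)
    (fun t ht =>
      (hasDerivAt_oddQuot (interior_subset ht)).differentiableAt.differentiableWithinAt)
    (fun t ht => ?_)
  rw [interior_Ioo] at ht
  rw [(hasDerivAt_oddQuot ht).deriv]
  have := one_add_rpow_mul_add_one_sub_rpow_mul_nonneg ht.1 ht.2 (by linarith : 3 ≤ 2 * α - 1)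
  have : 0 ≤ (1 - t ^ 2) ^ (α - 3) := rpow_nonneg (by nlinarith [ht.1, ht.2]) _
  positivity

lemma monotoneOn_powSum_mul_powDiff_div (hα : 2 ≤ α) :
    MonotoneOn (fun t => powSum α t * powDiff α t / (t * (1 - t ^ 2) ^ (α - 2))) (Ioo 0 1) := by
  have hsq : MonotoneOn (fun t : ℝ => -(2 * (1 - t ^ 2))) (Ioo 0 1) := fun s hs t ht hst => by
    nlinarith [hs.1]
  refine ((monotoneOn_oddQuot hα).add hsq).congr fun t ht => ?_
  have h1 : 0 < 1 - t ^ 2 := by nlinarith [ht.1, ht.2]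
  have ht0 : t ≠ 0 := ht.1.ne'
  have hT : (1 - t ^ 2) ^ (α - 2) ≠ 0 := (rpow_pos_of_pos h1 _).ne'
  simp only [oddQuot]
  rw [powSum_mul_powDiff ⟨by linarith [ht.1], ht.2⟩, rpow_eq_rpow_sub_mul_pow h1.ne' (α - 1) 1]
  field_simp
  ring_nf

lemma powSum_mul_powDiff_mul_le (hα : 2 ≤ α) {v : ℝ} (hv : v ∈ Icc 0 1)
    (ht : t ∈ Ioo 0 1) :
    powSum α (v * t) * powDiff α (v * t) * (1 - t ^ 2) ^ (α - 2)
      ≤ v * (1 - (v * t) ^ 2) ^ (α - 2) * (powSum α t * powDiff α t) := by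
  rcases hv.1.eq_or_lt with rfl | hv0
  · simp [powDiff]
  have hw : v * t ∈ Ioo 0 1 := ⟨mul_pos hv0 ht.1, by nlinarith [hv.2, ht.1, ht.2]⟩
  have hwt : v * t ≤ t := by nlinarith [hv.2, ht.1]
  have hmono := monotoneOn_powSum_mul_powDiff_div hα hw ht hwt
  have hpos : ∀ s ∈ Ioo (0 : ℝ) 1, 0 < s * (1 - s ^ 2) ^ (α - 2) := fun s hs =>
    mul_pos hs.1 (rpow_pos_of_pos (by nlinarith [hs.1, hs.2]) _)
  rw [div_le_div_iff₀ (hpos _ hw) (hpos _ ht)] at hmono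
  refine le_of_mul_le_mul_left ?_ ht.1
  linear_combination hmono

lemma mul_mem_Ioo_neg_one_one {v : ℝ} (hv : v ∈ Icc 0 1) (ht : t ∈ Ioo 0 1) :
    v * t ∈ Ioo (-1) 1 :=
  ⟨by nlinarith [hv.1, ht.1], by nlinarith [hv.2, ht.1, ht.2]⟩

lemma powDiff_pos (hα : 1 < α) (ht : t ∈ Ioo 0 1) : 0 < powDiff α t :=
  sub_pos.2 (rpow_lt_rpow (by linarith [ht.2]) (by linarith [ht.1]) (by linarith))

lemma pairNormDeriv_pos (hα : 1 < α) (ht : t ∈ Ioo 0 1) : 0 < pairNormDeriv α t :=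
  mul_pos (rpow_pos_of_pos (powSum_pos ⟨by linarith [ht.1], ht.2⟩) _) (powDiff_pos hα ht)

lemma monotoneOn_pairNormDeriv_ratio (hα : 2 ≤ α) {v : ℝ} (hv : v ∈ Icc 0 1) :
    MonotoneOn (fun t => v * pairNormDeriv α (v * t) / pairNormDeriv α t) (Ioo 0 1) := by
  have hα0 : α ≠ 0 := by linarith
  have hderiv : ∀ t ∈ Ioo (0 : ℝ) 1,
      HasDerivAt (fun t => v * pairNormDeriv α (v * t) / pairNormDeriv α t)
      ((v * (4 * (α - 1) * powSum α (v * t) ^ (1 / α - 2) * (1 - (v * t) ^ 2) ^ (α - 2) * v)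
        * pairNormDeriv α t
        - v * pairNormDeriv α (v * t)
          * (4 * (α - 1) * powSum α t ^ (1 / α - 2) * (1 - t ^ 2) ^ (α - 2)))
        / pairNormDeriv α t ^ 2) t := by
    intro t ht
    have hw := mul_mem_Ioo_neg_one_one hv ht
    have hinner := (hasDerivAt_pairNormDeriv hα0 hw).comp t ((hasDerivAt_id' t).const_mul v)
    rw [mul_one] at hinner
    exact (hinner.const_mul v).div (hasDerivAt_pairNormDeriv hα0 ⟨by linarith [ht.1], ht.2⟩)
      (pairNormDeriv_pos (by linarith) ht).ne'
  refine monotoneOn_of_deriv_nonneg (convex_Ioo 0 1)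
    (fun t ht => (hderiv t ht).continuousAt.continuousWithinAt)
    (fun t ht => (hderiv t (interior_subset ht)).differentiableAt.differentiableWithinAt)
    (fun t ht => ?_)
  rw [interior_Ioo] at ht
  rw [(hderiv t ht).deriv]
  refine div_nonneg ?_ (sq_nonneg _)
  have hw := mul_mem_Ioo_neg_one_one hv ht
  have hsplit : ∀ s ∈ Ioo (-1 : ℝ) 1,
      pairNormDeriv α s = powSum α s ^ (1 / α - 2) * (powSum α s * powDiff α s) :=
    fun s hs => by
    rw [pairNormDeriv, ← mul_assoc, ← rpow_add_one (powSum_pos hs).ne']; ring_nf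
  rw [hsplit _ hw, hsplit t ⟨by linarith [ht.1], ht.2⟩]
  have hkey := powSum_mul_powDiff_mul_le hα hv ht
  have hc : 0 ≤ 4 * (α - 1) * powSum α (v * t) ^ (1 / α - 2) * powSum α t ^ (1 / α - 2) := by
    have := (rpow_pos_of_pos (powSum_pos (α := α) hw) (1 / α - 2)).le
    have := (rpow_pos_of_pos (powSum_pos (α := α) ⟨by linarith [ht.1], ht.2⟩) (1 / α - 2)).le
    have : 0 ≤ α - 1 := by linarith
    positivity
  have := mul_nonneg (mul_nonneg hv.1 hc) (sub_nonneg.2 hkey)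
  linear_combination this

lemma continuous_pairNorm (hα : 0 ≤ α) : Continuous (pairNorm α) := by
  have hpow := continuous_rpow_const hα
  exact (continuous_rpow_const (one_div_nonneg.2 hα)).comp
    ((hpow.comp (continuous_const.add continuous_id)).add
      (hpow.comp (continuous_const.sub continuous_id)))

lemma strictMonoOn_pairNorm (hα : 1 < α) : StrictMonoOn (pairNorm α) (Icc 0 1) := by
  refine strictMonoOn_of_deriv_pos (convex_Icc 0 1)
    (continuous_pairNorm (by linarith)).continuousOn fun t ht => ?_
  rw [interior_Icc] at ht
  rw [(hasDerivAt_pairNorm (by linarith) ⟨by linarith [ht.1], ht.2⟩).deriv]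
  exact pairNormDeriv_pos hα ht

lemma pairNorm_zero : pairNorm α 0 = 2 ^ (1 / α) := by
  norm_num [pairNorm, powSum]

lemma pairNorm_one (hα : α ≠ 0) : pairNorm α 1 = 2 := by
  rw [pairNorm, powSum, sub_self, zero_rpow hα, add_zero, show (1 + 1 : ℝ) = 2 by norm_num,
    ← rpow_mul (by norm_num), mul_one_div_cancel hα, rpow_one]

lemma kA_eq_pairNorm (hα : α ≠ 0) {p : ℝ} (hp : p ∈ Icc 0 1) :
    kA α p = pairNorm α (1 - 2 * p) / 2 := by
  have h2 : (0 : ℝ) ≤ 2 := by norm_num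
  rw [pairNorm, powSum, show 1 + (1 - 2 * p) = 2 * (1 - p) by ring,
    show 1 - (1 - 2 * p) = 2 * p by ring, mul_rpow h2 (by linarith [hp.2]),
    mul_rpow h2 hp.1, ← mul_add, add_comm, mul_rpow (by positivity)
      (add_nonneg (rpow_nonneg hp.1 _) (rpow_nonneg (by linarith [hp.2]) _)),
    ← rpow_mul h2, mul_one_div_cancel hα, rpow_one, kA]
  ring

lemma strictAntiOn_kA (hα : 1 < α) : StrictAntiOn (kA α) (Icc 0 (1 / 2)) := by
  intro p hp p' hp' hpp'
  have hα0 : α ≠ 0 := by linarith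
  rw [kA_eq_pairNorm hα0 ⟨hp.1, by linarith [hp.2]⟩,
    kA_eq_pairNorm hα0 ⟨hp'.1, by linarith [hp'.2]⟩]
  have := strictMonoOn_pairNorm hα ⟨by linarith [hp'.2], by linarith [hp'.1]⟩
    ⟨by linarith [hp.2], by linarith [hp.1]⟩ (by linarith : 1 - 2 * p' < 1 - 2 * p)
  linarith

lemma continuousOn_kA (hα : 0 < α) : ContinuousOn (kA α) (Icc 0 (1 / 2)) :=
  (((continuous_pairNorm hα.le).comp
    (continuous_const.sub (continuous_const.mul continuous_id))).div_const 2).continuousOn.congr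
    fun p hp => kA_eq_pairNorm hα.ne' ⟨hp.1, by linarith [hp.2]⟩

lemma kA_zero (hα : α ≠ 0) : kA α 0 = 1 := by
  rw [kA_eq_pairNorm hα ⟨le_rfl, zero_le_one⟩, mul_zero, sub_zero, pairNorm_one hα,
    div_self two_ne_zero]

lemma kA_half (hα : α ≠ 0) : kA α (1 / 2) = deltaA α := by
  rw [kA_eq_pairNorm hα ⟨by norm_num, by norm_num⟩, show 1 - 2 * (1 / 2 : ℝ) = 0 by norm_num,
    pairNorm_zero, deltaA, show (1 - α) / α = 1 / α - 1 by field_simp, rpow_sub_one two_ne_zero]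

lemma kA_image_Icc (hα : 1 < α) : kA α '' Icc 0 (1 / 2) = Icc (deltaA α) 1 := by
  rw [(continuousOn_kA (by linarith)).image_Icc_of_antitoneOn (by norm_num)
    (strictAntiOn_kA hα).antitoneOn, kA_zero (by linarith), kA_half (by linarith)]

variable {x : ℝ}

lemma kAInv_mem_Icc (hα : 1 < α) (hx : x ∈ Icc (deltaA α) 1) :
    kAInv α x ∈ Icc 0 (1 / 2) := by
  rw [← kA_image_Icc hα] at hx
  exact invFunOn_mem hx

lemma kA_kAInv (hα : 1 < α) (hx : x ∈ Icc (deltaA α) 1) : kA α (kAInv α x) = x := by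
  rw [← kA_image_Icc hα] at hx
  exact invFunOn_eq hx

lemma continuousOn_kAInv (hα : 1 < α) : ContinuousOn (kAInv α) (Icc (deltaA α) 1) := by
  rw [← kA_image_Icc hα]
  exact (continuousOn_kA (by linarith)).invFunOn_image isCompact_Icc (strictAntiOn_kA hα).injOn

lemma antitoneOn_kAInv (hα : 1 < α) : AntitoneOn (kAInv α) (Icc (deltaA α) 1) :=
  fun x hx x' hx' hxx' => (StrictAntiOn.le_iff_ge (strictAntiOn_kA hα) (kAInv_mem_Icc hα hx)
    (kAInv_mem_Icc hα hx')).1 (by rwa [kA_kAInv hα hx, kA_kAInv hα hx'])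

lemma kAInv_mem_Ioo (hα : 1 < α) (hx : x ∈ Ioo (deltaA α) 1) :
    kAInv α x ∈ Ioo 0 (1 / 2) := by
  have hx' := Ioo_subset_Icc_self hx
  obtain ⟨h0, h1⟩ := kAInv_mem_Icc hα hx'
  have hinv := kA_kAInv hα hx'
  refine ⟨h0.lt_of_ne fun h => ?_, h1.lt_of_ne fun h => ?_⟩
  · rw [← h, kA_zero (by linarith)] at hinv
    exact hx.2.ne' hinv
  · rw [h, kA_half (by linarith)] at hinv
    exact hx.1.ne hinv

lemma pairNorm_one_sub_two_mul_kAInv (hα : 1 < α) (hx : x ∈ Icc (deltaA α) 1) :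
    pairNorm α (1 - 2 * kAInv α x) / 2 = x := by
  have hp := kAInv_mem_Icc hα hx
  rw [← kA_eq_pairNorm (by linarith) ⟨hp.1, by linarith [hp.2]⟩, kA_kAInv hα hx]

lemma deltaA_le_one (hα : 1 ≤ α) : deltaA α ≤ 1 :=
  rpow_le_one_of_one_le_of_nonpos one_le_two
    (div_nonpos_of_nonpos_of_nonneg (by linarith) (by linarith))

lemma bconv_mem_Icc {a b : ℝ} (ha : a ∈ Icc 0 1) (hb : b ∈ Icc 0 1) :
    bconv a b ∈ Icc 0 1 := by
  unfold bconv
  constructor <;> nlinarith [ha.1, ha.2, hb.1, hb.2]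

lemma one_sub_two_mul_bconv (a b : ℝ) : 1 - 2 * bconv a b = (1 - 2 * a) * (1 - 2 * b) := by
  unfold bconv; ring

lemma kkA_comm (α x y : ℝ) : kkA α x y = kkA α y x := by
  unfold kkA bconv; ring_nf

theorem convexOn_kkA_left (hα : 2 ≤ α) {y : ℝ} (hy : y ∈ IA α) :
    ConvexOn ℝ (IA α) (fun x => kkA α x y) := by
  have hα1 : 1 < α := by linarith
  have hαpos : 0 < α := by linarith
  have hα0 : α ≠ 0 := hαpos.ne'
  rw [IA, uIcc_of_ge (deltaA_le_one hα1.le)] at hy ⊢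
  obtain ⟨hq0, hq1⟩ := kAInv_mem_Icc hα1 hy
  set v := 1 - 2 * kAInv α y
  have hv : v ∈ Icc 0 1 := ⟨by linarith, by linarith⟩
  have key := convexOn_comp_of_rightInvOn (a := deltaA α) (b := 1) (U := Ioo 0 1)
    (e := fun x => 1 - 2 * kAInv α x) (g := fun t => pairNorm α t / 2)
    (h := fun t => pairNorm α (v * t) / 2) (g' := fun t => pairNormDeriv α t / 2)
    (h' := fun t => v * pairNormDeriv α (v * t) / 2)
    (continuousOn_const.sub (continuousOn_const.mul (continuousOn_kAInv hα1)))
    (fun x hx x' hx' hxx' => by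
      linarith [antitoneOn_kAInv hα1 (Ioo_subset_Icc_self hx) (Ioo_subset_Icc_self hx') hxx'])
    (fun x hx => by
      obtain ⟨h0, h1⟩ := kAInv_mem_Ioo hα1 hx
      exact ⟨by linarith, by linarith⟩)
    (fun x hx => pairNorm_one_sub_two_mul_kAInv hα1 (Ioo_subset_Icc_self hx))
    (fun t ht => (hasDerivAt_pairNorm hα0 ⟨by linarith [ht.1], ht.2⟩).div_const 2)
    (fun t ht => (div_pos (pairNormDeriv_pos hα1 ht) two_pos).ne')
    (((continuous_pairNorm hαpos.le).comp (continuous_const.mul continuous_id)).div_const 2)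
    (fun t ht => (((hasDerivAt_pairNorm hα0 (mul_mem_Ioo_neg_one_one hv ht)).comp t
      ((hasDerivAt_id' t).const_mul v)).div_const 2).congr_deriv (by ring))
    ((monotoneOn_pairNormDeriv_ratio hα hv).congr fun t _ =>
      (div_div_div_cancel_right₀ two_ne_zero _ _).symm)
  refine key.congr fun x hx => ?_
  have hp := kAInv_mem_Icc hα1 hx
  simp only [comp_apply, kkA]
  rw [kA_eq_pairNorm hα0 (bconv_mem_Icc ⟨hp.1, by linarith [hp.2]⟩ ⟨hq0, by linarith⟩),
    one_sub_two_mul_bconv, mul_comm]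

end KappaA

/-- For `α ≥ 2`, `κ_α^A` is convex in each argument on `I_α^A`. -/
theorem stmt_3 (α : ℝ) (hα : 2 ≤ α) :
    (∀ y ∈ IA α, ConvexOn ℝ (IA α) (fun x => kkA α x y)) ∧
    (∀ x ∈ IA α, ConvexOn ℝ (IA α) (fun y => kkA α x y)) :=
  ⟨fun _ hy => KappaA.convexOn_kkA_left hα hy, fun x hx => by
    simpa only [KappaA.kkA_comm α x] using KappaA.convexOn_kkA_left hα hx⟩
end
end

section
/- (Min-entropy combining equality.) Define k_∞^A(p) = max{p, 1-p} for p ∈ [0,1]. Then for every fixed c ∈ [0,1], the map x ↦ k_∞^A( (k_∞^A)^{-1}(x) ∗ c ) is affine in x on [1/2, 1] (where (k_∞^A)^{-1} is any right inverse of k_∞^A, the value being independent of the choice). Consequently, for (X_1,Y_1) independent of (X_2,Y_2) with X_i ∈ {0,1} and Y_i finite, H_∞(X_1+X_2|Y_1Y_2) = h_∞( h_∞^{-1}(H_∞(X_1|Y_1)) ∗ h_∞^{-1}(H_∞(X_2|Y_2)) ), where H_∞(X|Y) = −log Σ_y p(y)·max_x p(x|y), h_∞(p) = −log max{p, 1-p},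 and h_∞^{-1} : [0, log 2] → [0, 1/2] is the inverse of the restriction of h_∞ to [0,1/2]. -/
open Real

noncomputable section

/-- Sum over y of row-maxima. -/
def Sval {Y : Type*} [Fintype Y] (p : Bool → Y → ℝ) : ℝ :=
  ∑ y, max (p false y) (p true y)

lemma maxprod (a b c d : ℝ) :
    max (a*c + b*d) (a*d + b*c) = max a b * max c d + min a b * min c d := by
  rcases le_total a b with h1 | h1 <;> rcases le_total c d with h2 | h2
  · have h3 : a*d + b*c ≤ a*c + b*d := by nlinarith
    rw [max_eq_right h1, max_eq_right h2, min_eq_left h1, min_eq_left h2, max_eq_left h3]; ring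
  · have h3 : a*c + b*d ≤ a*d + b*c := by nlinarith
    rw [max_eq_right h1, max_eq_left h2, min_eq_left h1, min_eq_right h2, max_eq_right h3]; ring
  · have h3 : a*c + b*d ≤ a*d + b*c := by nlinarith
    rw [max_eq_left h1, max_eq_right h2, min_eq_right h1, min_eq_left h2, max_eq_right h3]
  · have h3 : a*d + b*c ≤ a*c + b*d := by nlinarith
    rw [max_eq_left h1, max_eq_left h2, min_eq_right h1, min_eq_right h2, max_eq_left h3]

lemma condInf_eq_Sval {Y : Type*} [Fintype Y] (p : Bool → Y → ℝ)
    (hnn : ∀ x y, 0 ≤ p x y) : condInf p = - Real.log (Sval p) := by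
  unfold condInf Sval
  congr 2
  apply Finset.sum_congr rfl
  intro y _
  have hm : margY p y = p true y + p false y := by
    unfold margY; rw [Fintype.sum_bool]
  rcases eq_or_lt_of_le (add_nonneg (hnn true y) (hnn false y)) with h0 | h0
  · have ht : p true y = 0 := by nlinarith [hnn true y, hnn false y]
    have hf : p false y = 0 := by nlinarith [hnn true y, hnn false y]
    simp [hm, ht, hf]
  · have hne : margY p y ≠ 0 := by rw [hm]; linarith
    rw [mul_max_of_nonneg _ _ (by rw [hm]; linarith : (0:ℝ) ≤ margY p y),
      mul_div_cancel₀ _ hne, mul_div_cancel₀ _ hne]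

lemma sum_rows_eq_one {Y : Type*} [Fintype Y] (p : Bool → Y → ℝ) (hp : IsPmf p) :
    ∑ y, (p false y + p true y) = 1 := by
  have h := hp.2
  rw [Fintype.sum_bool] at h
  rw [Finset.sum_add_distrib]
  linarith

lemma Sval_mem {Y : Type*} [Fintype Y] (p : Bool → Y → ℝ) (hp : IsPmf p) :
    1/2 ≤ Sval p ∧ Sval p ≤ 1 := by
  have h1 := sum_rows_eq_one p hp
  constructor
  · have h2 : (1:ℝ) ≤ 2 * Sval p := by
      unfold Sval
      rw [Finset.mul_sum, ← h1]
      apply Finset.sum_le_sum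
      intro y _
      have := le_max_left (p false y) (p true y)
      have := le_max_right (p false y) (p true y)
      linarith
    linarith
  · have h2 : Sval p ≤ ∑ y, (p false y + p true y) := by
      apply Finset.sum_le_sum
      intro y _
      rcases le_total (p false y) (p true y) with h | h
      · rw [max_eq_right h]; have := hp.1 false y; linarith
      · rw [max_eq_left h]; have := hp.1 true y; linarith
    linarith

lemma binHInf_of_le_half {q : ℝ} (hq : q ≤ 1/2) : binHInf q = - Real.log (1 - q) := by
  unfold binHInf
  rw [max_eq_right (by linarith)]

lemma binHInf_injOn : Set.InjOn binHInf (Set.Icc 0 (1/2)) := by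
  intro a ha b hb hab
  rw [binHInf_of_le_half ha.2, binHInf_of_le_half hb.2] at hab
  have h1 : (0:ℝ) < 1 - a := by linarith [ha.2]
  have h2 : (0:ℝ) < 1 - b := by linarith [hb.2]
  have := congrArg Real.exp (neg_injective hab)
  rw [Real.exp_log h1, Real.exp_log h2] at this
  linarith

lemma binHInfInv_condInf {Y : Type*} [Fintype Y] (p : Bool → Y → ℝ) (hp : IsPmf p) :
    binHInfInv (condInf p) = 1 - Sval p := by
  obtain ⟨hS1, hS2⟩ := Sval_mem p hp
  have hmem : 1 - Sval p ∈ Set.Icc (0:ℝ) (1/2) := ⟨by linarith, by linarith⟩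
  have heq : condInf p = binHInf (1 - Sval p) := by
    rw [condInf_eq_Sval p hp.1, binHInf_of_le_half hmem.2]
    ring_nf
  rw [heq]
  exact binHInf_injOn.leftInvOn_invFunOn hmem

lemma Sval_combine {Y1 Y2 : Type*} [Fintype Y1] [Fintype Y2]
    (p1 : Bool → Y1 → ℝ) (p2 : Bool → Y2 → ℝ) (hp1 : IsPmf p1) (hp2 : IsPmf p2) :
    Sval (combine p1 p2) = Sval p1 * Sval p2 + (1 - Sval p1) * (1 - Sval p2) := by
  have hT1 : ∑ y, min (p1 false y) (p1 true y) = 1 - Sval p1 := by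
    have h0 := sum_rows_eq_one p1 hp1
    have h2 : ∑ y, (min (p1 false y) (p1 true y) + max (p1 false y) (p1 true y))
        = ∑ y, (p1 false y + p1 true y) := by
      apply Finset.sum_congr rfl; intro y _; rw [min_add_max]
    rw [Finset.sum_add_distrib] at h2
    unfold Sval; linarith
  have hT2 : ∑ y, min (p2 false y) (p2 true y) = 1 - Sval p2 := by
    have h0 := sum_rows_eq_one p2 hp2
    have h2 : ∑ y, (min (p2 false y) (p2 true y) + max (p2 false y) (p2 true y))
        = ∑ y, (p2 false y + p2 true y) := by
      apply Finset.sum_congr rfl; intro y _; rw [min_add_max]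
    rw [Finset.sum_add_distrib] at h2
    unfold Sval; linarith
  have key : ∀ y : Y1 × Y2,
      max (combine p1 p2 false y) (combine p1 p2 true y)
        = max (p1 false y.1) (p1 true y.1) * max (p2 false y.2) (p2 true y.2)
          + min (p1 false y.1) (p1 true y.1) * min (p2 false y.2) (p2 true y.2) := by
    intro y
    have hf : combine p1 p2 false y
        = p1 true y.1 * p2 true y.2 + p1 false y.1 * p2 false y.2 := by
      unfold combine; rw [Fintype.sum_bool]; simp
    have ht : combine p1 p2 true y
        = p1 true y.1 * p2 false y.2 + p1 false y.1 * p2 true y.2 := by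
      unfold combine; rw [Fintype.sum_bool]; simp
    rw [hf, ht, maxprod, max_comm (p1 true y.1), max_comm (p2 true y.2),
      min_comm (p1 true y.1), min_comm (p2 true y.2)]
  rw [← hT1, ← hT2]
  unfold Sval
  calc ∑ y : Y1 × Y2, max (combine p1 p2 false y) (combine p1 p2 true y)
      = ∑ y : Y1 × Y2,
        (max (p1 false y.1) (p1 true y.1) * max (p2 false y.2) (p2 true y.2)
          + min (p1 false y.1) (p1 true y.1) * min (p2 false y.2) (p2 true y.2)) :=
        Finset.sum_congr rfl fun y _ => key y
    _ = _ := by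
        rw [Finset.sum_add_distrib, Fintype.sum_prod_type, Fintype.sum_prod_type,
          Finset.sum_mul_sum, Finset.sum_mul_sum]
/-- Min-entropy combining equality. The map
`x ↦ k_∞^A((k_∞^A)⁻¹(x) ∗ c)` is affine on `[1/2,1]` for any right inverse,
and consequently the conditional min-entropy combines exactly. -/
theorem stmt_5 {Y1 Y2 : Type*} [Fintype Y1] [Fintype Y2]
    (p1 : Bool → Y1 → ℝ) (p2 : Bool → Y2 → ℝ)
    (hp1 : IsPmf p1) (hp2 : IsPmf p2) :
    (∀ c ∈ Set.Icc (0 : ℝ) 1, ∀ g : ℝ → ℝ,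
      (∀ x ∈ Set.Icc (1/2 : ℝ) 1, kInf (g x) = x) →
      ∃ a b : ℝ, ∀ x ∈ Set.Icc (1/2 : ℝ) 1, kInf (bconv (g x) c) = a * x + b) ∧
    condInf (combine p1 p2) =
      binHInf (bconv (binHInfInv (condInf p1)) (binHInfInv (condInf p2))) := by
  constructor
  · intro c hc g hg
    have key : ∀ x ∈ Set.Icc (1/2 : ℝ) 1, kInf (bconv (g x) c) = kInf (bconv x c) := by
      intro x hx
      have h := hg x hx
      unfold kInf at h
      rcases max_choice (g x) (1 - g x) with h' | h'
      · rw [h'] at h; rw [h]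
      · have hgx : g x = 1 - x := by rw [h'] at h; linarith
        rw [hgx]
        have e1 : bconv (1 - x) c = 1 - bconv x c := by unfold bconv; ring
        rw [e1]
        unfold kInf
        rw [max_comm]
        congr 1
        ring
    rcases le_total c (1/2) with hcc | hcc
    · refine ⟨1 - 2*c, c, ?_⟩
      intro x hx
      rw [key x hx]
      unfold kInf bconv
      rw [max_eq_left (by nlinarith [hx.1, hx.2, hc.1])]
      ring
    · refine ⟨2*c - 1, 1 - c, ?_⟩
      intro x hx
      rw [key x hx]
      unfold kInf bconv
      rw [max_eq_right (by nlinarith [hx.1, hx.2, hc.2])]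
      ring
  · obtain ⟨h11, h12⟩ := Sval_mem p1 hp1
    obtain ⟨h21, h22⟩ := Sval_mem p2 hp2
    have hnn : ∀ x y, 0 ≤ combine p1 p2 x y := by
      intro x y
      unfold combine
      apply Finset.sum_nonneg
      intro i _
      exact mul_nonneg (hp1.1 _ _) (hp2.1 _ _)
    rw [condInf_eq_Sval _ hnn, Sval_combine p1 p2 hp1 hp2,
      binHInfInv_condInf p1 hp1, binHInfInv_condInf p2 hp2]
    have ht : bconv (1 - Sval p1) (1 - Sval p2) ≤ 1/2 := by
      unfold bconv; nlinarith
    rw [binHInf_of_le_half ht]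
    congr 2
    unfold bconv
    ring
end
end
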